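/- Let X be a set, g : X × X → (-∞,∞] a symmetric kernel, ζ a point, and E ⊆ X. Suppose ν is a probability measure supported on a compact set disjoint from a neighborhood where g(·,ζ) is infinite, such that g(·,ζ) is bounded on supp(ν) and ∫∫ g dν dν < ∞. If E is a Borel set of 'capacity zero' (no probability measure supported on a compact subset of E has finite energy ∫∫ g dμ dμ after subtracting the bounded terms), then ν(E) = 0. -/

import Mathlib

open MeasureTheory Filter
open scoped ENNReal

/-- The positive part of an extended real number, valued in `ℝ≥0∞`. -/
noncomputable def EReal.posPartENN (x : EReal) : ℝ≥0∞ :=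
  if x = ⊤ then ⊤ else ENNReal.ofReal x.toReal

/-- The integral of an `EReal`-valued function `f` against a measure `μ`, defined as the
difference of the `lintegral`s of the positive and negative parts of `f`. -/
noncomputable def eint {α : Type*} [MeasurableSpace α] (μ : Measure α) (f : α → EReal) :
    EReal :=
  ((∫⁻ a, (f a).posPartENN ∂μ : ℝ≥0∞) : EReal) - ((∫⁻ a, (-(f a)).posPartENN ∂μ : ℝ≥0∞) : EReal)

/-!
If `ν E > 0`, inner regularity gives a compact `K ⊆ E` with `ν K > 0`. The normalized
restriction `ν[|K]` is a probability measure carried by `K`, and it is dominated by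
`(ν K)⁻¹ • ν`; hence its energy is at most `(ν K)⁻²` times that of `ν`, which is finite.
This contradicts `E` having capacity zero.
-/

namespace ProbabilityTheory

variable {α : Type*} [MeasurableSpace α] (μ : Measure α) (s : Set α)

theorem cond_le_smul : μ[|s] ≤ (μ s)⁻¹ • μ := by
  unfold cond
  gcongr
  exact Measure.restrict_le_self

theorem prod_cond_le_smul_prod [SFinite μ] :
    μ[|s].prod μ[|s] ≤ ((μ s)⁻¹ * (μ s)⁻¹) • μ.prod μ :=
  calc μ[|s].prod μ[|s] ≤ ((μ s)⁻¹ • μ).prod ((μ s)⁻¹ • μ) :=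
        Measure.prod_mono (cond_le_smul μ s) (cond_le_smul μ s)
    _ = ((μ s)⁻¹ * (μ s)⁻¹) • μ.prod μ := by
        rw [Measure.prod_smul_left, Measure.prod_smul_right, smul_smul]

variable {s} in
theorem lintegral_prod_cond_ne_top [SFinite μ] (hs : μ s ≠ 0)
    {f : α × α → ℝ≥0∞} (hf : ∫⁻ p, f p ∂(μ.prod μ) ≠ ∞) :
    ∫⁻ p, f p ∂(μ[|s].prod μ[|s]) ≠ ∞ := by
  refine ne_top_of_le_ne_top ?_ (lintegral_mono' (prod_cond_le_smul_prod μ s) le_rfl)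
  have hinv : (μ s)⁻¹ ≠ ∞ := ENNReal.inv_ne_top.2 hs
  rw [lintegral_smul_measure]
  exact ENNReal.mul_ne_top (ENNReal.mul_ne_top hinv hinv) hf

end ProbabilityTheory

open ProbabilityTheory

theorem finite_energy_measure_null_on_capacity_zero_general
    {X : Type*} [TopologicalSpace X] [MeasurableSpace X]
    (g : X → X → EReal) (ζ : X)
    (ν : Measure X) [IsProbabilityMeasure ν] [ν.InnerRegular]
    (C : ℝ)
    (hfin : (∫⁻ p : X × X,
        ((g p.1 p.2 - g p.1 ζ - g p.2 ζ) - (C : EReal)).posPartENN ∂(ν.prod ν)) ≠ ⊤)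
    (E : Set X) (hE : MeasurableSet E)
    (hcap : ∀ μ : Measure X, IsProbabilityMeasure μ →
      (∃ e, e ⊆ E ∧ IsCompact e ∧ μ e = 1) →
      (∫⁻ p : X × X,
        ((g p.1 p.2 - g p.1 ζ - g p.2 ζ) - (C : EReal)).posPartENN ∂(μ.prod μ)) = ⊤) :
    ν E = 0 := by
  by_contra hνE
  obtain ⟨K, hKE, hK, hνK⟩ := hE.exists_lt_isCompact (pos_iff_ne_zero.2 hνE)
  have hprob : IsProbabilityMeasure ν[|K] := cond_isProbabilityMeasure hνK.ne'
  exact lintegral_prod_cond_ne_top ν hνK.ne' hfin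
    (hcap _ hprob ⟨K, hKE, hK, cond_apply_self hνK.ne' (measure_ne_top ν K)⟩)

/-- Finite-energy measures give no mass to capacity-zero sets: let `g` be a symmetric
kernel, `ζ` a point, and `ν` a probability measure carried by a compact set `S` on which
`g(·,ζ)` is finite and bounded and on which the extended kernel
`g(x,y) - g(x,ζ) - g(y,ζ)` is bounded below by `C`. If `ν` has finite energy (the
positive part of the energy, after subtracting the bound `C`, is finite) and `E` is a
Borel set of capacity zero (every probability measure carried by a compact subset of `E`
has infinite energy after subtracting `C`), then `ν E = 0`. -/
theorem finite_energy_measure_null_on_capacity_zero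
    {X : Type*} [TopologicalSpace X] [MeasurableSpace X] [BorelSpace X]
    (g : X → X → EReal) (hsym : ∀ x y, g x y = g y x) (ζ : X)
    (ν : Measure X) [IsProbabilityMeasure ν] [ν.InnerRegular]
    (S : Set X) (hS : IsCompact S) (hSν : ν S = 1)
    (B : ℝ) (hB : ∀ x ∈ S, g x ζ ≠ ⊤ ∧ (-(B : EReal)) ≤ g x ζ ∧ g x ζ ≤ (B : EReal))
    (C : ℝ) (hC : ∀ x ∈ S, ∀ y ∈ S, (C : EReal) ≤ g x y - g x ζ - g y ζ)
    (hfin : (∫⁻ p : X × X,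
        ((g p.1 p.2 - g p.1 ζ - g p.2 ζ) - (C : EReal)).posPartENN ∂(ν.prod ν)) ≠ ⊤)
    (E : Set X) (hE : MeasurableSet E)
    (hcap : ∀ μ : Measure X, IsProbabilityMeasure μ →
      (∃ e, e ⊆ E ∧ IsCompact e ∧ μ e = 1) →
      (∫⁻ p : X × X,
        ((g p.1 p.2 - g p.1 ζ - g p.2 ζ) - (C : EReal)).posPartENN ∂(μ.prod μ)) = ⊤) :
    ν E = 0 :=
  finite_energy_measure_null_on_capacity_zero_general g ζ ν C hfin E hE hcap
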